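/- (Almost sure consensus, Theorem 1) In the distributed setup described in the context, consensus of the estimates is achieved almost surely: for every agent i ∈ {1, ..., n}, ‖ξ^i_k − ξ̄_k‖₂ → 0 as k → ∞ with probability one. -/

import Mathlib

open MeasureTheory ProbabilityTheory Filter
open scoped BigOperators RealInnerProductSpace Topology

/-- The two-sided randomized difference
`d = [f(x + cΔ) − f(x − cΔ) + ε] Δ⁻ / (2c)`, where `Δ⁻` is the vector of
componentwise reciprocals of `Δ`. -/
noncomputable def twoSidedDiff {m : ℕ} (f : EuclideanSpace ℝ (Fin m) → ℝ) (c : ℝ)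
    (x Δ : EuclideanSpace ℝ (Fin m)) (e : ℝ) : EuclideanSpace ℝ (Fin m) :=
  ((f (x + c • Δ) - f (x - c • Δ) + e) / (2 * c)) •
    (WithLp.toLp 2 (fun p => (Δ p)⁻¹) : EuclideanSpace ℝ (Fin m))

/-!
Almost surely the dithers are bounded and `(ι k / c k) * ε k i → 0`, because the squares of
these noise terms have summable expectations; hence the perturbations `ι k • d^i_k` of the
projected consensus iteration tend to zero, and the statement becomes a deterministic one.

For `z ∈ ⋂ i, X i` the function `V z k = ∑ i, ‖ξ k i - z‖ ^ 2` decreases at each step by the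
`dissipation` (the spread of the states around the mixed states plus the displacement done by
the projections), up to an error that vanishes with the perturbations. By joint connectivity, the
disagreement at time `k` is controlled by the dissipation over the window `[k, k + κ)`. A
persisting disagreement would therefore dissipate the bounded function `V z` indefinitely, so
the disagreement becomes small infinitely often; whenever it is small, compactness provides a
`z ∈ ⋂ i, X i` close to all agents, and `V z`, hence the dissipation over the next few windows,
stays small.
-/

section InnerProduct

variable {E : Type*} [NormedAddCommGroup E] [InnerProductSpace ℝ E]

theorem norm_sub_sq_add_norm_sub_sq_le_of_forall_norm_sub_le {s : Set E} (hs : Convex ℝ s)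
    {y p z : E} (hp : p ∈ s) (hmin : ∀ w ∈ s, ‖y - p‖ ≤ ‖y - w‖) (hz : z ∈ s) :
    ‖p - z‖ ^ 2 + ‖y - p‖ ^ 2 ≤ ‖y - z‖ ^ 2 := by
  have : Nonempty s := ⟨⟨p, hp⟩⟩
  have hinf : ‖y - p‖ = ⨅ w : s, ‖y - w‖ :=
    le_antisymm (le_ciInf fun w => hmin w w.2)
      (ciInf_le ⟨0, Set.forall_mem_range.2 fun _ => norm_nonneg _⟩ (⟨p, hp⟩ : s))
  have hinner := (norm_eq_iInf_iff_real_inner_le_zero hs hp).1 hinf z hz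
  have hsplit : y - z = (y - p) - (z - p) := by abel
  rw [hsplit, norm_sub_sq_real (y - p), norm_sub_rev p z]
  linarith

theorem sum_mul_norm_sub_sq_eq {ι : Type*} [Fintype ι] {w : ι → ℝ} (hw : ∑ j, w j = 1)
    (y : ι → E) (z : E) :
    ∑ j, w j * ‖y j - z‖ ^ 2
      = ‖∑ j, w j • y j - z‖ ^ 2 + ∑ j, w j * ‖y j - ∑ l, w l • y l‖ ^ 2 := by
  set x := ∑ l, w l • y l
  have hx : x - z = ∑ j, w j • (y j - z) := by
    simp only [smul_sub, Finset.sum_sub_distrib, ← Finset.sum_smul, hw, one_smul, x]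
  have hcross : ∑ j, w j * ⟪y j - z, x - z⟫ = ‖x - z‖ ^ 2 := by
    simp only [← real_inner_smul_left, ← sum_inner, ← hx, real_inner_self_eq_norm_sq]
  have hterm : ∀ j, ‖y j - x‖ ^ 2 = ‖y j - z‖ ^ 2 - 2 * ⟪y j - z, x - z⟫ + ‖x - z‖ ^ 2 := by
    intro j
    rw [← norm_sub_sq_real, sub_sub_sub_cancel_right]
  calc ∑ j, w j * ‖y j - z‖ ^ 2
      = ∑ j, (w j * ‖y j - x‖ ^ 2 + 2 * (w j * ⟪y j - z, x - z⟫) - w j * ‖x - z‖ ^ 2) :=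
        Finset.sum_congr rfl fun j _ => by rw [hterm]; ring
    _ = ∑ j, w j * ‖y j - x‖ ^ 2 + 2 * ∑ j, w j * ⟪y j - z, x - z⟫
        - (∑ j, w j) * ‖x - z‖ ^ 2 := by
      rw [Finset.sum_sub_distrib, Finset.sum_add_distrib, ← Finset.mul_sum, ← Finset.sum_mul]
    _ = ‖x - z‖ ^ 2 + ∑ j, w j * ‖y j - x‖ ^ 2 := by rw [hcross, hw]; ring

end InnerProduct

theorem norm_le_sqrt_card_mul_of_forall_abs_le {ι : Type*} [Fintype ι] {v : EuclideanSpace ℝ ι}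
    {a : ℝ} (ha : 0 ≤ a) (hv : ∀ p, |v p| ≤ a) : ‖v‖ ≤ √(Fintype.card ι) * a := by
  rw [EuclideanSpace.norm_eq, ← Real.sqrt_sq ha, ← Real.sqrt_mul (Nat.cast_nonneg _)]
  gcongr
  calc ∑ p, ‖v p‖ ^ 2 ≤ ∑ _p : ι, a ^ 2 := by
        gcongr with p; exact (Real.norm_eq_abs _).trans_le (hv p)
    _ = _ := by simp

theorem norm_sub_inv_card_smul_sum_le {E ι : Type*} [NormedAddCommGroup E] [NormedSpace ℝ E]
    [Fintype ι] (x : ι → E) (i : ι) :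
    ‖x i - (Fintype.card ι : ℝ)⁻¹ • ∑ j, x j‖ ≤ (Fintype.card ι : ℝ)⁻¹ * ∑ j, ‖x i - x j‖ := by
  have : Nonempty ι := ⟨i⟩
  have hcard : (Fintype.card ι : ℝ) ≠ 0 := Nat.cast_ne_zero.2 Fintype.card_ne_zero
  have hsplit : x i - (Fintype.card ι : ℝ)⁻¹ • ∑ j, x j
      = (Fintype.card ι : ℝ)⁻¹ • ∑ j, (x i - x j) := by
    rw [Finset.sum_sub_distrib, smul_sub, Finset.sum_const, Finset.card_univ,
      ← Nat.cast_smul_eq_nsmul ℝ, smul_smul, inv_mul_cancel₀ hcard, one_smul]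
  rw [hsplit, norm_smul, Real.norm_of_nonneg (by positivity)]
  gcongr
  exact norm_sum_le _ _

theorem norm_sub_le_sum_sum_norm_sub {E ι : Type*} [SeminormedAddCommGroup E] [Fintype ι]
    (x : ι → E) (i j : ι) : ‖x i - x j‖ ≤ ∑ a, ∑ b, ‖x a - x b‖ :=
  (Finset.single_le_sum (f := fun b => ‖x i - x b‖) (fun _ _ => norm_nonneg _)
    (Finset.mem_univ j)).trans (Finset.single_le_sum (f := fun a => ∑ b, ‖x a - x b‖)
      (fun _ _ => Finset.sum_nonneg fun _ _ => norm_nonneg _) (Finset.mem_univ i))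

theorem exists_mem_iInter_forall_dist_le {α ι : Type*} [MetricSpace α] [Finite ι]
    {X : ι → Set α} (hX : ∀ i, IsClosed (X i)) {i₀ : ι} (hK : IsCompact (X i₀)) {ε : ℝ}
    (hε : 0 < ε) :
    ∃ σ > 0, ∀ x : ι → α, (∀ i, x i ∈ X i) → (∀ i, dist (x i) (x i₀) ≤ σ) →
      ∃ z ∈ ⋂ i, X i, ∀ i, dist (x i) z ≤ ε := by
  by_contra! h
  choose x hxX hxσ hfar using fun k : ℕ => h (1 / (k + 1)) Nat.one_div_pos_of_nat
  obtain ⟨p, -, φ, hφ, hp⟩ := hK.tendsto_subseq fun k => hxX k i₀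
  have hxp : ∀ i, Tendsto (fun k => x (φ k) i) atTop (𝓝 p) := fun i =>
    tendsto_of_tendsto_of_dist hp <| squeeze_zero (fun _ => dist_nonneg)
      (fun k => by rw [dist_comm]; exact hxσ (φ k) i)
      (tendsto_one_div_add_atTop_nhds_zero_nat.comp hφ.tendsto_atTop)
  have hpX : p ∈ ⋂ i, X i := Set.mem_iInter.2 fun i =>
    (hX i).mem_of_tendsto (hxp i) (Eventually.of_forall fun k => hxX _ i)
  obtain ⟨k, hk⟩ :=
    (eventually_all.2 fun i => (hxp i).eventually (Metric.ball_mem_nhds p hε)).exists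
  obtain ⟨i, hi⟩ := hfar (φ k) p hpX
  exact (hk i).not_gt hi

theorem exists_pos_forall_exists_sum_norm_sub_sq_le {E ι : Type*} [NormedAddCommGroup E]
    [Fintype ι] {X : ι → Set E} (hX : ∀ i, IsClosed (X i)) {i₀ : ι} (hK : IsCompact (X i₀))
    {ε : ℝ} (hε : 0 < ε) :
    ∃ σ > 0, ∀ x : ι → E, (∀ i, x i ∈ X i) → ∑ a, ∑ b, ‖x a - x b‖ ≤ σ →
      ∃ z ∈ ⋂ i, X i, ∑ i, ‖x i - z‖ ^ 2 ≤ ε := by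
  set δ := √(ε / (Fintype.card ι + 1))
  obtain ⟨σ, hσ, hδ⟩ := exists_mem_iInter_forall_dist_le hX hK (ε := δ) (by positivity)
  refine ⟨σ, hσ, fun x hx hxσ => ?_⟩
  have hpair : ∀ i, dist (x i) (x i₀) ≤ σ := fun i =>
    (dist_eq_norm _ _).trans_le ((norm_sub_le_sum_sum_norm_sub x i i₀).trans hxσ)
  obtain ⟨z, hz, hxz⟩ := hδ x hx hpair
  refine ⟨z, hz, ?_⟩
  calc ∑ i, ‖x i - z‖ ^ 2 ≤ ∑ _i : ι, δ ^ 2 := by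
        gcongr with i; rw [← dist_eq_norm]; exact hxz i
    _ = Fintype.card ι * (ε / (Fintype.card ι + 1)) := by
        rw [Finset.sum_const, Finset.card_univ, nsmul_eq_mul, Real.sq_sqrt (by positivity)]
    _ ≤ ε := by
        rw [mul_div_assoc', div_le_iff₀ (by positivity)]; nlinarith

theorem add_sum_Ico_le_of_forall_add_le {u Φ g : ℕ → ℝ} (h : ∀ k, u (k + 1) + Φ k ≤ u k + g k)
    {a b : ℕ} (hab : a ≤ b) :
    u b + ∑ s ∈ Finset.Ico a b, Φ s ≤ u a + ∑ s ∈ Finset.Ico a b, g s := by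
  induction b, hab using Nat.le_induction with
  | base => simp
  | succ b hab ih =>
    rw [Finset.sum_Ico_succ_top hab, Finset.sum_Ico_succ_top hab]
    linarith [h b]

theorem tendsto_sum_Ico_add_of_tendsto_zero {g : ℕ → ℝ} (hg : Tendsto g atTop (𝓝 0)) (ℓ : ℕ) :
    Tendsto (fun k => ∑ s ∈ Finset.Ico k (k + ℓ), g s) atTop (𝓝 0) := by
  simp_rw [Finset.sum_Ico_eq_sum_range, Nat.add_sub_cancel_left]
  simpa using tendsto_finsetSum (Finset.range ℓ) fun j _ => hg.comp (tendsto_add_atTop_nat j)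

section WindowLyapunov

variable {Z : Type*} {ℓ : ℕ} {V : Z → ℕ → ℝ} {Φ g S ρ : ℕ → ℝ} {C Vmax : ℝ}

theorem exists_pos_eventually_le_sum_Ico_of_lt (hC : 0 < C)
    (hS : ∀ k, S k ≤ C * √(∑ s ∈ Finset.Ico k (k + ℓ), Φ s) + ρ k)
    (hρ : Tendsto ρ atTop (𝓝 0)) {σ : ℝ} (hσ : 0 < σ) :
    ∃ β > 0, ∀ᶠ k in atTop, σ < S k → β ≤ ∑ s ∈ Finset.Ico k (k + ℓ), Φ s := by
  refine ⟨(σ / (2 * C)) ^ 2, by positivity, ?_⟩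
  filter_upwards [hρ.eventually (gt_mem_nhds (half_pos hσ))] with k hρk hSk
  have : σ / (2 * C) < √(∑ s ∈ Finset.Ico k (k + ℓ), Φ s) := by
    rw [div_lt_iff₀ (by positivity)]
    nlinarith [hS k]
  exact ((Real.lt_sqrt (by positivity)).1 this).le

/- Without a small value of `S` in `[q, q + M * ℓ)`, each of the `M` windows dissipates at
least `β`, which the bounded `V z` cannot supply once `M * β > Vmax`. -/
theorem exists_eventually_exists_mem_Ico_le [Nonempty Z] (hℓ : 0 < ℓ) (hC : 0 < C)
    (hV : ∀ z k, 0 ≤ V z k) (hVmax : ∀ z k, V z k ≤ Vmax)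
    (hstep : ∀ z k, V z (k + 1) + Φ k ≤ V z k + g k)
    (hS : ∀ k, S k ≤ C * √(∑ s ∈ Finset.Ico k (k + ℓ), Φ s) + ρ k)
    (hg : Tendsto g atTop (𝓝 0)) (hρ : Tendsto ρ atTop (𝓝 0)) {σ : ℝ} (hσ : 0 < σ) :
    ∃ M : ℕ, ∀ᶠ q in atTop, ∃ k ∈ Finset.Ico q (q + M * ℓ), S k ≤ σ := by
  obtain ⟨β, hβ, hburn⟩ := exists_pos_eventually_le_sum_Ico_of_lt hC hS hρ hσ
  obtain ⟨M, hM⟩ := exists_nat_gt (Vmax / β)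
  rw [div_lt_iff₀ hβ] at hM
  obtain ⟨N, hN⟩ := eventually_atTop.1 hburn
  refine ⟨M, ?_⟩
  filter_upwards [(tendsto_sum_Ico_add_of_tendsto_zero hg (M * ℓ)).eventually
    (gt_mem_nhds (sub_pos.2 hM)), eventually_ge_atTop N] with q hgq hqN
  by_contra! hfar
  have hblocks : ∀ j ≤ M, j * β ≤ ∑ s ∈ Finset.Ico q (q + j * ℓ), Φ s := by
    intro j hj
    induction j with
    | zero => simp
    | succ j ih =>
      have hjM : q + j * ℓ ∈ Finset.Ico q (q + M * ℓ) :=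
        Finset.mem_Ico.2 ⟨Nat.le_add_right _ _, by nlinarith⟩
      rw [show q + (j + 1) * ℓ = q + j * ℓ + ℓ by ring, ← Finset.sum_Ico_consecutive _
        (Nat.le_add_right q (j * ℓ)) (Nat.le_add_right _ ℓ)]
      push_cast
      linarith [ih (by omega), hN (q + j * ℓ) (by omega) (hfar _ hjM)]
  obtain ⟨z⟩ := ‹Nonempty Z›
  linarith [add_sum_Ico_le_of_forall_add_le (hstep z) (Nat.le_add_right q (M * ℓ)),
    hblocks M le_rfl, hV z (q + M * ℓ), hVmax z q]

theorem tendsto_sum_Ico_of_anchored [Nonempty Z] (hℓ : 0 < ℓ) (hC : 0 < C)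
    (hΦ : ∀ k, 0 ≤ Φ k) (hg0 : ∀ k, 0 ≤ g k)
    (hV : ∀ z k, 0 ≤ V z k) (hVmax : ∀ z k, V z k ≤ Vmax)
    (hstep : ∀ z k, V z (k + 1) + Φ k ≤ V z k + g k)
    (hS : ∀ k, S k ≤ C * √(∑ s ∈ Finset.Ico k (k + ℓ), Φ s) + ρ k)
    (hanchor : ∀ ε > 0, ∃ σ > 0, ∀ q, S q ≤ σ → ∃ z, V z q ≤ ε)
    (hg : Tendsto g atTop (𝓝 0)) (hρ : Tendsto ρ atTop (𝓝 0)) :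
    Tendsto (fun k => ∑ s ∈ Finset.Ico k (k + ℓ), Φ s) atTop (𝓝 0) := by
  refine tendsto_order.2 ⟨fun a ha => Eventually.of_forall fun k =>
    ha.trans_le (Finset.sum_nonneg fun s _ => hΦ s), fun ε hε => ?_⟩
  obtain ⟨σ, hσ, hanchorσ⟩ := hanchor (ε / 2) (half_pos hε)
  obtain ⟨M, hM⟩ := exists_eventually_exists_mem_Ico_le hℓ hC hV hVmax hstep hS hg hρ hσ
  -- Started at an anchor `k ∈ [q, q + M * ℓ)`, `V z` stays below `ε / 2` plus the errors `g`
  -- accumulated until the end of the window that follows `q + M * ℓ`.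
  have hshift : ∀ᶠ q in atTop, ∑ s ∈ Finset.Ico (q + M * ℓ) (q + M * ℓ + ℓ), Φ s < ε := by
    filter_upwards [hM, (tendsto_sum_Ico_add_of_tendsto_zero hg (M * ℓ + ℓ)).eventually
      (gt_mem_nhds (half_pos hε))] with q ⟨k, hk, hSk⟩ hgq
    obtain ⟨z, hz⟩ := hanchorσ k hSk
    rw [Finset.mem_Ico] at hk
    have hΦ_le : ∑ s ∈ Finset.Ico (q + M * ℓ) (q + M * ℓ + ℓ), Φ s
        ≤ ∑ s ∈ Finset.Ico k (q + M * ℓ + ℓ), Φ s :=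
      Finset.sum_le_sum_of_subset_of_nonneg (Finset.Ico_subset_Ico hk.2.le le_rfl)
        fun s _ _ => hΦ s
    have hg_le : ∑ s ∈ Finset.Ico k (q + M * ℓ + ℓ), g s
        ≤ ∑ s ∈ Finset.Ico q (q + (M * ℓ + ℓ)), g s :=
      Finset.sum_le_sum_of_subset_of_nonneg (Finset.Ico_subset_Ico hk.1 (by omega))
        fun s _ _ => hg0 s
    linarith [add_sum_Ico_le_of_forall_add_le (hstep z) (by omega : k ≤ q + M * ℓ + ℓ),
      hV z (q + M * ℓ + ℓ)]
  obtain ⟨N, hN⟩ := eventually_atTop.1 hshift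
  filter_upwards [eventually_ge_atTop (N + M * ℓ)] with k hk
  simpa [Nat.sub_add_cancel (by omega : M * ℓ ≤ k)] using hN (k - M * ℓ) (by omega)

theorem tendsto_zero_of_anchored [Nonempty Z] (hℓ : 0 < ℓ) (hC : 0 < C)
    (hΦ : ∀ k, 0 ≤ Φ k) (hg0 : ∀ k, 0 ≤ g k) (hS0 : ∀ k, 0 ≤ S k)
    (hV : ∀ z k, 0 ≤ V z k) (hVmax : ∀ z k, V z k ≤ Vmax)
    (hstep : ∀ z k, V z (k + 1) + Φ k ≤ V z k + g k)
    (hS : ∀ k, S k ≤ C * √(∑ s ∈ Finset.Ico k (k + ℓ), Φ s) + ρ k)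
    (hanchor : ∀ ε > 0, ∃ σ > 0, ∀ q, S q ≤ σ → ∃ z, V z q ≤ ε)
    (hg : Tendsto g atTop (𝓝 0)) (hρ : Tendsto ρ atTop (𝓝 0)) :
    Tendsto S atTop (𝓝 0) :=
  squeeze_zero hS0 hS <| by
    simpa using ((tendsto_sum_Ico_of_anchored hℓ hC hΦ hg0 hV hVmax hstep hS hanchor hg
      hρ).sqrt.const_mul C).add hρ

end WindowLyapunov

section ProjectedConsensus

variable {E : Type*} [NormedAddCommGroup E] [InnerProductSpace ℝ E] {ι : Type*} [Fintype ι]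

noncomputable def mix (W : ι → ι → ℝ) (x : ι → E) (i : ι) : E := ∑ j, W i j • x j

noncomputable def dissipation (W : ι → ι → ℝ) (x w x' : ι → E) : ℝ :=
  ∑ i, ∑ j, W i j * ‖x j - mix W x i‖ ^ 2 + ∑ i, ‖x' i - (mix W x i - w i)‖ ^ 2

variable {W : ι → ι → ℝ} {x w x' : ι → E}

theorem sum_norm_sub_sq_add_dissipation_le (hrow : ∀ i, ∑ j, W i j = 1)
    (hcol : ∀ j, ∑ i, W i j = 1) {X : ι → Set E} (hX : ∀ i, Convex ℝ (X i)) {P : ι → E → E}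
    (hP : ∀ i y, P i y ∈ X i ∧ ∀ z ∈ X i, ‖y - P i y‖ ≤ ‖y - z‖)
    (hx' : ∀ i, x' i = P i (mix W x i - w i)) {z : E} (hz : ∀ i, z ∈ X i) {D : ℝ}
    (hD : ∀ i, ‖mix W x i - z‖ ≤ D) :
    ∑ i, ‖x' i - z‖ ^ 2 + dissipation W x w x'
      ≤ ∑ i, ‖x i - z‖ ^ 2 + ∑ i, ‖w i‖ * (2 * D + ‖w i‖) := by
  have hproj : ∀ i, ‖x' i - z‖ ^ 2 + ‖x' i - (mix W x i - w i)‖ ^ 2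
      ≤ ‖mix W x i - z‖ ^ 2 + ‖w i‖ * (2 * D + ‖w i‖) := by
    intro i
    have hpz := norm_sub_sq_add_norm_sub_sq_le_of_forall_norm_sub_le (hX i)
      (hP i (mix W x i - w i)).1 (hP i _).2 (hz i)
    rw [← hx', norm_sub_rev (mix W x i - w i)] at hpz
    have hyz : ‖mix W x i - w i - z‖ ≤ ‖mix W x i - z‖ + ‖w i‖ := by
      rw [sub_right_comm]; exact norm_sub_le _ _
    nlinarith [norm_nonneg (mix W x i - w i - z), norm_nonneg (mix W x i - z), norm_nonneg (w i),
      hD i]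
  have hmix : ∑ i, ‖mix W x i - z‖ ^ 2 + ∑ i, ∑ j, W i j * ‖x j - mix W x i‖ ^ 2
      = ∑ j, ‖x j - z‖ ^ 2 := by
    calc _ = ∑ i, ∑ j, W i j * ‖x j - z‖ ^ 2 := by
          rw [← Finset.sum_add_distrib]
          exact Finset.sum_congr rfl fun i _ => (sum_mul_norm_sub_sq_eq (hrow i) x z).symm
      _ = ∑ j, ‖x j - z‖ ^ 2 := by
          rw [Finset.sum_comm]
          simp only [← Finset.sum_mul, hcol, one_mul]
  have := Finset.sum_le_sum fun i (_ : i ∈ Finset.univ) => hproj i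
  simp only [Finset.sum_add_distrib] at this
  unfold dissipation
  linarith

theorem norm_mix_le (hW : ∀ i j, 0 ≤ W i j) (hrow : ∀ i, ∑ j, W i j = 1) {R : ℝ}
    (hx : ∀ j, ‖x j‖ ≤ R) (i : ι) : ‖mix W x i‖ ≤ R :=
  mem_closedBall_zero_iff.1 <| (convex_closedBall 0 R).sum_mem (fun j _ => hW i j) (hrow i)
    fun j _ => mem_closedBall_zero_iff.2 (hx j)

theorem dissipation_nonneg (hW : ∀ i j, 0 ≤ W i j) : 0 ≤ dissipation W x w x' :=
  add_nonneg (Finset.sum_nonneg fun i _ => Finset.sum_nonneg fun j _ =>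
    mul_nonneg (hW i j) (sq_nonneg _)) (Finset.sum_nonneg fun _ _ => sq_nonneg _)

theorem mul_norm_sub_mix_sq_le_dissipation (hW : ∀ i j, 0 ≤ W i j) (i j : ι) :
    W i j * ‖x j - mix W x i‖ ^ 2 ≤ dissipation W x w x' := by
  have hG : ∀ i, 0 ≤ ∑ j, W i j * ‖x j - mix W x i‖ ^ 2 := fun i =>
    Finset.sum_nonneg fun j _ => mul_nonneg (hW i j) (sq_nonneg _)
  have hΨ : 0 ≤ ∑ i, ‖x' i - (mix W x i - w i)‖ ^ 2 := Finset.sum_nonneg fun _ _ => sq_nonneg _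
  unfold dissipation
  linarith [Finset.single_le_sum (f := fun j => W i j * ‖x j - mix W x i‖ ^ 2)
    (fun j _ => mul_nonneg (hW i j) (sq_nonneg _)) (Finset.mem_univ j),
    Finset.single_le_sum (fun i _ => hG i) (Finset.mem_univ i)]

theorem norm_sub_le_sqrt_dissipation (hW : ∀ i j, 0 ≤ W i j) (i : ι) :
    ‖x' i - (mix W x i - w i)‖ ≤ √(dissipation W x w x') := by
  have hG : 0 ≤ ∑ i, ∑ j, W i j * ‖x j - mix W x i‖ ^ 2 :=
    Finset.sum_nonneg fun i _ => Finset.sum_nonneg fun j _ => mul_nonneg (hW i j) (sq_nonneg _)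
  rw [← Real.sqrt_sq (norm_nonneg _)]
  gcongr
  unfold dissipation
  linarith [Finset.single_le_sum (f := fun i => ‖x' i - (mix W x i - w i)‖ ^ 2)
    (fun i _ => sq_nonneg _) (Finset.mem_univ i)]

theorem norm_sub_mix_le (hW : ∀ i j, 0 ≤ W i j) {η : ℝ} (hη : 0 < η) {i j : ι}
    (hij : η ≤ W i j) : ‖x j - mix W x i‖ ≤ (√η)⁻¹ * √(dissipation W x w x') := by
  have h := (mul_le_mul_of_nonneg_right hij (sq_nonneg _)).trans
    (mul_norm_sub_mix_sq_le_dissipation (x := x) (x' := x') (w := w) hW i j)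
  rw [← div_eq_inv_mul, le_div_iff₀ (Real.sqrt_pos.2 hη), ← Real.sqrt_sq (norm_nonneg _),
    ← Real.sqrt_mul' _ hη.le]
  exact Real.sqrt_le_sqrt (by linarith)

theorem norm_step_sub_le (hW : ∀ i j, 0 ≤ W i j) {η : ℝ} (hη : 0 < η) {i : ι}
    (hii : η ≤ W i i) :
    ‖x' i - x i‖ ≤ (1 + (√η)⁻¹) * √(dissipation W x w x') + ‖w i‖ := by
  have hsplit : x' i - x i = (x' i - (mix W x i - w i)) - (x i - mix W x i) - w i := by abel
  rw [hsplit]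
  linarith [norm_sub_le (x' i - (mix W x i - w i) - (x i - mix W x i)) (w i),
    norm_sub_le (x' i - (mix W x i - w i)) (x i - mix W x i),
    norm_sub_le_sqrt_dissipation (x := x) (x' := x') (w := w) hW i,
    norm_sub_mix_le (x := x) (x' := x') (w := w) hW hη hii]

theorem norm_sub_le_of_le_weight (hW : ∀ i j, 0 ≤ W i j) {η : ℝ} (hη : 0 < η) {i j : ι}
    (hii : η ≤ W i i) (hij : η ≤ W i j) :
    ‖x i - x j‖ ≤ 2 * (√η)⁻¹ * √(dissipation W x w x') := by
  linarith [norm_sub_le_norm_sub_add_norm_sub (x i) (mix W x i) (x j),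
    norm_sub_rev (mix W x i) (x j), norm_sub_mix_le (x := x) (x' := x') (w := w) hW hη hii,
    norm_sub_mix_le (x := x) (x' := x') (w := w) hW hη hij]

end ProjectedConsensus

section ProjectedConsensusIteration

variable {E : Type*} [NormedAddCommGroup E] [InnerProductSpace ℝ E] {ι : Type*} [Fintype ι]
  {W : ℕ → ι → ι → ℝ} {ξ w : ℕ → ι → E} {η : ℝ} {κ : ℕ}

theorem norm_sub_le_sum_Ico_dissipation (hW : ∀ k i j, 0 ≤ W k i j) (hη : 0 < η)
    (hdiag : ∀ k i, η ≤ W k i i) (hconn : ∀ k i j, ∃ t, k ≤ t ∧ t < k + κ ∧ η ≤ W t i j)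
    (k : ℕ) (i j : ι) :
    ‖ξ k i - ξ k j‖ ≤ 2 * (κ + 1) * (1 + (√η)⁻¹) *
        √(∑ s ∈ Finset.Ico k (k + κ), dissipation (W s) (ξ s) (w s) (ξ (s + 1)))
      + ∑ s ∈ Finset.Ico k (k + κ), (‖w s i‖ + ‖w s j‖) := by
  obtain ⟨t, hkt, htκ, hij⟩ := hconn k i j
  set Φ := fun s => dissipation (W s) (ξ s) (w s) (ξ (s + 1))
  set θ := 1 + (√η)⁻¹
  set Φw := ∑ s ∈ Finset.Ico k (k + κ), Φ s
  have hθ : (√η)⁻¹ ≤ θ := le_add_of_nonneg_left zero_le_one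
  have hΦ : ∀ s ∈ Finset.Ico k (k + κ), √(Φ s) ≤ √Φw := fun s hs =>
    Real.sqrt_le_sqrt (Finset.single_le_sum (f := Φ) (fun s _ => dissipation_nonneg (hW s)) hs)
  have hpath : ∀ l, ‖ξ k l - ξ t l‖ ≤ κ * θ * √Φw + ∑ s ∈ Finset.Ico k (k + κ), ‖w s l‖ := by
    intro l
    calc ‖ξ k l - ξ t l‖ ≤ ∑ s ∈ Finset.Ico k t, dist (ξ s l) (ξ (s + 1) l) := by
          rw [← dist_eq_norm]; exact dist_le_Ico_sum_dist (fun s => ξ s l) hkt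
      _ ≤ ∑ s ∈ Finset.Ico k (k + κ), (θ * √Φw + ‖w s l‖) := by
          refine Finset.sum_le_sum_of_subset_of_nonneg (Finset.Ico_subset_Ico le_rfl htκ.le)
            (fun s _ _ => by positivity) |>.trans' (Finset.sum_le_sum fun s hs => ?_)
          rw [dist_comm, dist_eq_norm]
          have hs' : s ∈ Finset.Ico k (k + κ) :=
            Finset.Ico_subset_Ico le_rfl htκ.le hs
          nlinarith [norm_step_sub_le (x := ξ s) (x' := ξ (s + 1)) (w := w s) (hW s) hη (hdiag s l),
            hΦ s hs', Real.sqrt_nonneg (Φ s), (by positivity : (0 : ℝ) ≤ θ)]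
      _ = κ * θ * √Φw + ∑ s ∈ Finset.Ico k (k + κ), ‖w s l‖ := by
          rw [Finset.sum_add_distrib, Finset.sum_const, Nat.card_Ico, nsmul_eq_mul,
            Nat.add_sub_cancel_left, mul_assoc]
  have hmeet : ‖ξ t i - ξ t j‖ ≤ 2 * θ * √Φw := by
    have := norm_sub_le_of_le_weight (x := ξ t) (x' := ξ (t + 1)) (w := w t) (hW t) hη
      (hdiag t i) hij
    have hΦt := hΦ t (Finset.mem_Ico.2 ⟨hkt, htκ⟩)
    nlinarith [Real.sqrt_nonneg (Φ t), Real.sqrt_nonneg Φw, inv_nonneg.2 (Real.sqrt_nonneg η)]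
  have hsplit := norm_sub_le_norm_sub_add_norm_sub (ξ k i) (ξ t i) (ξ k j)
  have hsplit' := norm_sub_le_norm_sub_add_norm_sub (ξ t i) (ξ t j) (ξ k j)
  rw [Finset.sum_add_distrib]
  linarith [hpath i, hpath j, norm_sub_rev (ξ t j) (ξ k j)]

theorem sum_sum_norm_sub_le_sum_Ico_dissipation (hW : ∀ k i j, 0 ≤ W k i j) (hη : 0 < η)
    (hdiag : ∀ k i, η ≤ W k i i) (hconn : ∀ k i j, ∃ t, k ≤ t ∧ t < k + κ ∧ η ≤ W t i j)
    (k : ℕ) :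
    ∑ a, ∑ b, ‖ξ k a - ξ k b‖ ≤ (Fintype.card ι : ℝ) ^ 2 * (2 * (κ + 1) * (1 + (√η)⁻¹)) *
        √(∑ s ∈ Finset.Ico k (k + κ), dissipation (W s) (ξ s) (w s) (ξ (s + 1)))
      + ∑ a, ∑ b, ∑ s ∈ Finset.Ico k (k + κ), (‖w s a‖ + ‖w s b‖) := by
  refine (Finset.sum_le_sum fun a _ => Finset.sum_le_sum fun b _ =>
    norm_sub_le_sum_Ico_dissipation (w := w) hW hη hdiag hconn k a b).trans_eq ?_
  simp only [Finset.sum_add_distrib, Finset.sum_const, Finset.card_univ, nsmul_eq_mul]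
  ring

theorem tendsto_norm_sub_of_projected_consensus {X : ι → Set E} (hXc : ∀ i, IsCompact (X i))
    (hXcv : ∀ i, Convex ℝ (X i)) (hX : (⋂ i, X i).Nonempty) {P : ι → E → E}
    (hP : ∀ i y, P i y ∈ X i ∧ ∀ z ∈ X i, ‖y - P i y‖ ≤ ‖y - z‖)
    (hη : 0 < η) (hκ : 0 < κ) (hW : ∀ k i j, 0 ≤ W k i j) (hrow : ∀ k i, ∑ j, W k i j = 1)
    (hcol : ∀ k j, ∑ i, W k i j = 1) (hdiag : ∀ k i, η ≤ W k i i)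
    (hconn : ∀ k i j, ∃ t, k ≤ t ∧ t < k + κ ∧ η ≤ W t i j)
    (hinit : ∀ i, ξ 0 i ∈ X i) (hstep : ∀ k i, ξ (k + 1) i = P i (mix (W k) (ξ k) i - w k i))
    (hw : ∀ i, Tendsto (fun k => w k i) atTop (𝓝 0)) (i j : ι) :
    Tendsto (fun k => ‖ξ k i - ξ k j‖) atTop (𝓝 0) := by
  have hmem : ∀ k l, ξ k l ∈ X l := fun k l => by
    cases k with
    | zero => exact hinit l
    | succ k => rw [hstep]; exact (hP l _).1
  obtain ⟨R, hR⟩ := (isCompact_iUnion hXc).isBounded.subset_closedBall 0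
  have hXR : ∀ l, ∀ y ∈ X l, ‖y‖ ≤ R := fun l y hy =>
    mem_closedBall_zero_iff.1 (hR (Set.mem_iUnion_of_mem l hy))
  have hzX : ∀ z : ↥(⋂ l, X l), ∀ l, z.1 ∈ X l := fun z => Set.mem_iInter.1 z.2
  have : Nonempty ↥(⋂ l, X l) := hX.to_subtype
  have : 0 < Fintype.card ι := Fintype.card_pos_iff.2 ⟨i⟩
  have hR0 : 0 ≤ R := (norm_nonneg _).trans (hXR i _ (hmem 0 i))
  have hSlim : Tendsto (fun k => ∑ a, ∑ b, ‖ξ k a - ξ k b‖) atTop (𝓝 0) := by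
    refine tendsto_zero_of_anchored (V := fun (z : ↥(⋂ l, X l)) k => ∑ l, ‖ξ k l - z‖ ^ 2)
      (Vmax := Fintype.card ι * (2 * R) ^ 2)
      (g := fun k => ∑ l, ‖w k l‖ * (2 * (2 * R) + ‖w k l‖)) hκ (by positivity)
      (fun k => dissipation_nonneg (hW k)) (fun k => by positivity) (fun k => by positivity)
      (fun z k => by positivity) (fun z k => ?_) (fun z k => ?_)
      (sum_sum_norm_sub_le_sum_Ico_dissipation (w := w) hW hη hdiag hconn) (fun ε hε => ?_) ?_ ?_
    · calc ∑ l, ‖ξ k l - z‖ ^ 2 ≤ ∑ _l : ι, (2 * R) ^ 2 := by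
            gcongr with l
            linarith [norm_sub_le (ξ k l) z, hXR l _ (hmem k l), hXR l _ (hzX z l)]
        _ = _ := by simp
    · refine sum_norm_sub_sq_add_dissipation_le (hrow k) (hcol k) hXcv hP (hstep k) (hzX z)
        fun l => ?_
      linarith [norm_sub_le (mix (W k) (ξ k) l) z, hXR l _ (hzX z l),
        norm_mix_le (hW k) (hrow k) (fun j => hXR j _ (hmem k j)) l]
    · obtain ⟨σ, hσ, h⟩ := exists_pos_forall_exists_sum_norm_sub_sq_le
        (fun l => (hXc l).isClosed) (hXc i) hε
      exact ⟨σ, hσ, fun q hq => let ⟨z, hz, hzε⟩ := h (ξ q) (hmem q) hq; ⟨⟨z, hz⟩, hzε⟩⟩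
    · simpa using tendsto_finsetSum Finset.univ fun l _ =>
        (hw l).norm.mul (tendsto_const_nhds.add (hw l).norm)
    · simpa using tendsto_finsetSum Finset.univ fun a _ => tendsto_finsetSum Finset.univ
        fun b _ => tendsto_sum_Ico_add_of_tendsto_zero
          (by simpa using (hw a).norm.add (hw b).norm) κ
  exact squeeze_zero (fun _ => norm_nonneg _) (fun k => norm_sub_le_sum_sum_norm_sub (ξ k) i j)
    hSlim

end ProjectedConsensusIteration

theorem ae_tendsto_zero_of_summable_integral_sq {Ω : Type*} [MeasurableSpace Ω] {μ : Measure Ω}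
    {Z : ℕ → Ω → ℝ} (hZ : ∀ k, MemLp (Z k) 2 μ)
    (hsum : Summable fun k => ∫ ω, Z k ω ^ 2 ∂μ) :
    ∀ᵐ ω ∂μ, Tendsto (fun k => Z k ω) atTop (𝓝 0) := by
  have hint : ∀ k, Integrable (fun ω => Z k ω ^ 2) μ := fun k => (hZ k).integrable_sq
  have hnorm : ∀ k, eLpNorm (fun ω => Z k ω ^ 2) 1 μ = ENNReal.ofReal (∫ ω, Z k ω ^ 2 ∂μ) := by
    intro k
    rw [eLpNorm_one_eq_lintegral_enorm, ← ofReal_integral_norm_eq_lintegral_enorm (hint k)]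
    simp
  have hfin : ∑' k, eLpNorm (fun ω => Z k ω ^ 2) 1 μ ≠ ⊤ := by
    rw [tsum_congr hnorm, ← ENNReal.ofReal_tsum_of_nonneg
      (fun k => integral_nonneg fun ω => sq_nonneg _) hsum]
    exact ENNReal.ofReal_ne_top
  filter_upwards [summable_norm_of_tsum_eLpNorm_ne_top le_rfl
    (fun k => (hint k).aestronglyMeasurable) hfin] with ω hω
  rw [tendsto_zero_iff_norm_tendsto_zero]
  simpa [Real.sqrt_sq_eq_abs] using hω.tendsto_atTop_zero.sqrt

theorem norm_twoSidedDiff_le {m : ℕ} {f : EuclideanSpace ℝ (Fin m) → ℝ} {L : ℝ} (hL : 0 ≤ L)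
    (hf : ∀ x y, |f x - f y| ≤ L * ‖x - y‖) {a b c : ℝ} (ha : 0 ≤ a) (hb : 0 ≤ b) (hc : 0 < c)
    (x : EuclideanSpace ℝ (Fin m)) {Δ : EuclideanSpace ℝ (Fin m)}
    (hΔ : ∀ p, |Δ p| ≤ a ∧ |(Δ p)⁻¹| ≤ b) (e : ℝ) :
    ‖twoSidedDiff f c x Δ e‖ ≤ (L * (√m * a) + |e| / (2 * c)) * (√m * b) := by
  have hΔa : ‖Δ‖ ≤ √m * a := by
    simpa using norm_le_sqrt_card_mul_of_forall_abs_le ha fun p => (hΔ p).1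
  have hΔb : ‖(WithLp.toLp 2 (fun p => (Δ p)⁻¹) : EuclideanSpace ℝ (Fin m))‖ ≤ √m * b := by
    simpa using norm_le_sqrt_card_mul_of_forall_abs_le (v := WithLp.toLp 2 fun p => (Δ p)⁻¹) hb
      fun p => (hΔ p).2
  have hdiff : |f (x + c • Δ) - f (x - c • Δ)| ≤ 2 * c * (L * (√m * a)) := by
    have hsub : x + c • Δ - (x - c • Δ) = (2 * c) • Δ := by module
    calc _ ≤ L * ‖(2 * c) • Δ‖ := hsub ▸ hf _ _
      _ ≤ 2 * c * (L * (√m * a)) := by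
        rw [norm_smul, Real.norm_of_nonneg (by positivity)]
        nlinarith [mul_le_mul_of_nonneg_left hΔa (by positivity : (0 : ℝ) ≤ 2 * c * L)]
  unfold twoSidedDiff
  rw [norm_smul, Real.norm_eq_abs, abs_div, abs_of_pos (by positivity : (0 : ℝ) < 2 * c)]
  gcongr
  rw [div_le_iff₀ (by positivity), add_mul, div_mul_cancel₀ _ (by positivity)]
  linarith [abs_add_le (f (x + c • Δ) - f (x - c • Δ)) e]

theorem tendsto_smul_twoSidedDiff {m : ℕ} {f : EuclideanSpace ℝ (Fin m) → ℝ} {L : ℝ}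
    (hL : 0 ≤ L) (hf : ∀ x y, |f x - f y| ≤ L * ‖x - y‖) {a b : ℝ} (ha : 0 ≤ a) (hb : 0 ≤ b)
    {γ c e : ℕ → ℝ} (hγ : ∀ k, 0 < γ k) (hc : ∀ k, 0 < c k) (hγ0 : Tendsto γ atTop (𝓝 0))
    (he : Tendsto (fun k => γ k / c k * e k) atTop (𝓝 0)) (x : ℕ → EuclideanSpace ℝ (Fin m))
    {Δ : ℕ → EuclideanSpace ℝ (Fin m)} (hΔ : ∀ k p, |Δ k p| ≤ a ∧ |(Δ k p)⁻¹| ≤ b) :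
    Tendsto (fun k => γ k • twoSidedDiff f (c k) (x k) (Δ k) (e k)) atTop (𝓝 0) := by
  refine squeeze_zero_norm (fun k => ?_) (a := fun k =>
    γ k * (L * (√m * a) * (√m * b)) + |γ k / c k * e k| * (√m * b) / 2) (by
      simpa using (hγ0.mul_const _).add ((he.abs.mul_const (√m * b)).div_const 2))
  rw [norm_smul, Real.norm_of_nonneg (hγ k).le, abs_mul, abs_of_pos (div_pos (hγ k) (hc k))]
  calc _ ≤ γ k * ((L * (√m * a) + |e k| / (2 * c k)) * (√m * b)) :=
        mul_le_mul_of_nonneg_left (norm_twoSidedDiff_le hL hf ha hb (hc k) (x k) (hΔ k) (e k))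
          (hγ k).le
    _ = _ := by field_simp [(hc k).ne']

theorem distributed_subgradient_free_as_consensus_general
    {Ω : Type*} [inst : MeasurableSpace Ω] (μ : MeasureTheory.Measure Ω)
    (m n : ℕ)
    (f : Fin n → EuclideanSpace ℝ (Fin m) → ℝ)
    (X : Fin n → Set (EuclideanSpace ℝ (Fin m)))
    (L a b e η : ℝ) (κ : ℕ)
    (W : ℕ → Fin n → Fin n → ℝ)
    (ι c : ℕ → ℝ)
    (ξ : ℕ → Fin n → Ω → EuclideanSpace ℝ (Fin m))
    (Δ : ℕ → Fin n → Ω → EuclideanSpace ℝ (Fin m))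
    (ε : ℕ → Fin n → Ω → ℝ)
    (P : Fin n → EuclideanSpace ℝ (Fin m) → EuclideanSpace ℝ (Fin m))
    -- local objective functions: convex, with all subgradients bounded by L, hence L-Lipschitz
    (hL : 0 < L)
    (hlip : ∀ i (x y : EuclideanSpace ℝ (Fin m)), |f i x - f i y| ≤ L * ‖x - y‖)
    -- local constraint sets: nonempty bounded closed convex, with nonempty intersection
    (hXcl : ∀ i, IsClosed (X i))
    (hXcv : ∀ i, Convex ℝ (X i)) (hXbd : ∀ i, Bornology.IsBounded (X i))
    (hXcapne : (⋂ i, X i).Nonempty)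
    -- Euclidean projections onto the constraint sets
    (hP : ∀ i z, P i z ∈ X i ∧ ∀ w ∈ X i, ‖z - P i z‖ ≤ ‖z - w‖)
    -- network: doubly stochastic weights, uniformly positive entries, joint connectivity
    (hη0 : 0 < η)
    (hWnonneg : ∀ k i j, 0 ≤ W k i j)
    (hWrow : ∀ k i, ∑ j, W k i j = 1)
    (hWcol : ∀ k j, ∑ i, W k i j = 1)
    (hWdiag : ∀ k i, η ≤ W k i i)
    (hκ : 1 ≤ κ)
    (hconn : ∀ k (i j : Fin n), ∃ t, k ≤ t ∧ t < k + κ ∧ η ≤ W t i j)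
    -- the algorithm: x^i_k = ∑_j w^{ij}_k ξ^j_k, ξ^i_{k+1} = P_{X_i}(x^i_k − ι_k d^i_k)
    (hinit : ∀ i ω, ξ 0 i ω ∈ X i)
    (hupdate : ∀ k i ω,
      ξ (k + 1) i ω = P i ((∑ j, W k i j • ξ k j ω) -
        ι k • twoSidedDiff (f i) (c k) (∑ j, W k i j • ξ k j ω) (Δ k i ω) (ε k i ω)))
    -- stochastic assumptions on dithers and noises
    (ha : 0 < a) (hb : 0 < b)
    (hΔbound : ∀ k i, ∀ᵐ ω ∂μ, ∀ p, |Δ k i ω p| < a ∧ |(Δ k i ω p)⁻¹| < b)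
    -- filtration and conditional properties of the noise
    (hεmem : ∀ k i, MemLp (ε k i) 2 μ)
    (hε2 : ∀ k i, ∫ ω, (ε k i ω) ^ 2 ∂μ ≤ e ^ 2)
    -- step sizes
    (hιpos : ∀ k, 0 < ι k) (hιsum : Summable ι)
    (hcpos : ∀ k, 0 < c k)
    (hratio2 : Summable (fun k => (ι k / c k) ^ 2)) :
    ∀ i, ∀ᵐ ω ∂μ,
      Tendsto (fun k => ‖ξ k i ω - (n : ℝ)⁻¹ • ∑ j, ξ k j ω‖) atTop (𝓝 0) := by
  intro i
  have hnoise : ∀ᵐ ω ∂μ, ∀ j, Tendsto (fun k => ι k / c k * ε k j ω) atTop (𝓝 0) :=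
    ae_all_iff.2 fun j => ae_tendsto_zero_of_summable_integral_sq
      (fun k => (hεmem k j).const_mul _) <| (hratio2.mul_right (e ^ 2)).of_nonneg_of_le
        (fun k => integral_nonneg fun ω => sq_nonneg _) fun k => by
          simp only [mul_pow, integral_const_mul]
          exact mul_le_mul_of_nonneg_left (hε2 k j) (sq_nonneg _)
  have hdither : ∀ᵐ ω ∂μ, ∀ k j p, |Δ k j ω p| ≤ a ∧ |(Δ k j ω p)⁻¹| ≤ b :=
    ae_all_iff.2 fun k => ae_all_iff.2 fun j =>
      (hΔbound k j).mono fun ω h p => ⟨(h p).1.le, (h p).2.le⟩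
  filter_upwards [hnoise, hdither] with ω hε hΔ
  have hcons := tendsto_norm_sub_of_projected_consensus (ξ := fun k l => ξ k l ω)
    (fun l => Metric.isCompact_of_isClosed_isBounded (hXcl l) (hXbd l)) hXcv hXcapne hP hη0 hκ
    hWnonneg hWrow hWcol hWdiag hconn (fun l => hinit l ω) (fun k l => hupdate k l ω)
    (fun j => tendsto_smul_twoSidedDiff hL.le (hlip j) ha.le hb.le hιpos hcpos
      hιsum.tendsto_atTop_zero (hε j) _ fun k => hΔ k j) i
  refine squeeze_zero (fun _ => norm_nonneg _) (fun k => ?_) (by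
    simpa using (tendsto_finsetSum Finset.univ fun j _ => hcons j).const_mul (n : ℝ)⁻¹)
  simpa using norm_sub_inv_card_smul_sum_le (fun j => ξ k j ω) i

/-- Almost sure consensus, Theorem 1: in the distributed
subgradient-free stochastic optimization setup with two-sided randomized differences,
for every agent `i`, `‖ξ^i_k − ξ̄_k‖ → 0` as `k → ∞` with probability one. -/
theorem distributed_subgradient_free_as_consensus
    {Ω : Type*} [inst : MeasurableSpace Ω] (μ : MeasureTheory.Measure Ω)
    [IsProbabilityMeasure μ]
    (m n : ℕ) (hn : 0 < n)
    (f : Fin n → EuclideanSpace ℝ (Fin m) → ℝ)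
    (X : Fin n → Set (EuclideanSpace ℝ (Fin m)))
    (L a b e η : ℝ) (κ : ℕ)
    (W : ℕ → Fin n → Fin n → ℝ)
    (ι c : ℕ → ℝ)
    (ξ : ℕ → Fin n → Ω → EuclideanSpace ℝ (Fin m))
    (Δ : ℕ → Fin n → Ω → EuclideanSpace ℝ (Fin m))
    (ε : ℕ → Fin n → Ω → ℝ)
    (P : Fin n → EuclideanSpace ℝ (Fin m) → EuclideanSpace ℝ (Fin m))
    (F : ℕ → MeasurableSpace Ω)
    -- local objective functions: convex, with all subgradients bounded by L, hence L-Lipschitz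
    (hL : 0 < L)
    (hconv : ∀ i, ConvexOn ℝ Set.univ (f i))
    (hsubgrad : ∀ i x, ∃ g : EuclideanSpace ℝ (Fin m),
      ‖g‖ ≤ L ∧ ∀ y, f i x + ⟪g, y - x⟫ ≤ f i y)
    (hsubbound : ∀ i x (g : EuclideanSpace ℝ (Fin m)),
      (∀ y, f i x + ⟪g, y - x⟫ ≤ f i y) → ‖g‖ ≤ L)
    (hlip : ∀ i (x y : EuclideanSpace ℝ (Fin m)), |f i x - f i y| ≤ L * ‖x - y‖)
    -- local constraint sets: nonempty bounded closed convex, with nonempty intersection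
    (hXne : ∀ i, (X i).Nonempty) (hXcl : ∀ i, IsClosed (X i))
    (hXcv : ∀ i, Convex ℝ (X i)) (hXbd : ∀ i, Bornology.IsBounded (X i))
    (hXcapne : (⋂ i, X i).Nonempty)
    -- Euclidean projections onto the constraint sets
    (hP : ∀ i z, P i z ∈ X i ∧ ∀ w ∈ X i, ‖z - P i z‖ ≤ ‖z - w‖)
    -- network: doubly stochastic weights, uniformly positive entries, joint connectivity
    (hη0 : 0 < η) (hη1 : η < 1)
    (hWnonneg : ∀ k i j, 0 ≤ W k i j)
    (hWrow : ∀ k i, ∑ j, W k i j = 1)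
    (hWcol : ∀ k j, ∑ i, W k i j = 1)
    (hWdiag : ∀ k i, η ≤ W k i i)
    (hWpos : ∀ k i j, 0 < W k i j → η ≤ W k i j)
    (hκ : 1 ≤ κ)
    (hconn : ∀ k (i j : Fin n), ∃ t, k ≤ t ∧ t < k + κ ∧ η ≤ W t i j)
    -- the algorithm: x^i_k = ∑_j w^{ij}_k ξ^j_k, ξ^i_{k+1} = P_{X_i}(x^i_k − ι_k d^i_k)
    (hinit : ∀ i ω, ξ 0 i ω ∈ X i)
    (hupdate : ∀ k i ω,
      ξ (k + 1) i ω = P i ((∑ j, W k i j • ξ k j ω) -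
        ι k • twoSidedDiff (f i) (c k) (∑ j, W k i j • ξ k j ω) (Δ k i ω) (ε k i ω)))
    -- stochastic assumptions on dithers and noises
    (ha : 0 < a) (hb : 0 < b) (he : 0 < e)
    (hΔmeas : ∀ k i, Measurable (Δ k i))
    (hεmeas : ∀ k i, Measurable (ε k i))
    (hξ0meas : ∀ i, Measurable (ξ 0 i))
    (hΔne : ∀ k i, ∀ᵐ ω ∂μ, ∀ p, Δ k i ω p ≠ 0)
    (hΔbound : ∀ k i, ∀ᵐ ω ∂μ, ∀ p, |Δ k i ω p| < a ∧ |(Δ k i ω p)⁻¹| < b)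
    (hΔmean : ∀ k i p, ∫ ω, (Δ k i ω p)⁻¹ ∂μ = 0)
    (hΔindep : iIndepFun (β := fun _ : ℕ × Fin n × Fin m => ℝ)
      (fun t ω => Δ t.1 t.2.1 ω t.2.2) μ)
    (hΔident : ∀ k k' i p,
      IdentDistrib (fun ω => Δ k i ω p) (fun ω => Δ k' i ω p) μ μ)
    (hΔεindep : Indep (⨆ k, ⨆ i, MeasurableSpace.comap (Δ k i) inferInstance)
      (⨆ k, ⨆ i, MeasurableSpace.comap (ε k i) inferInstance) μ)
    -- filtration and conditional properties of the noise
    (hFle : ∀ k, F k ≤ inst)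
    (hFmono : Monotone F)
    (hFξ : ∀ k s i, s ≤ k → Measurable[F k] (ξ s i))
    (hFΔ : ∀ k s i, s < k → Measurable[F k] (Δ s i))
    (hFε : ∀ k s i, s < k → Measurable[F k] (ε s i))
    (hεcond : ∀ k i, μ[ε (k + 1) i | F k] =ᵐ[μ] 0)
    (hεmem : ∀ k i, MemLp (ε k i) 2 μ)
    (hε2 : ∀ k i, ∫ ω, (ε k i ω) ^ 2 ∂μ ≤ e ^ 2)
    -- step sizes
    (hιpos : ∀ k, 0 < ι k) (hιsum : Summable ι)
    (hcpos : ∀ k, 0 < c k) (hc0 : Tendsto c atTop (𝓝 0))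
    (hratio : ¬ Summable (fun k => ι k / c k))
    (hratio2 : Summable (fun k => (ι k / c k) ^ 2))
    (hιc : Summable (fun k => ι k * c k)) :
    ∀ i, ∀ᵐ ω ∂μ,
      Tendsto (fun k => ‖ξ k i ω - (n : ℝ)⁻¹ • ∑ j, ξ k j ω‖) atTop (𝓝 0) :=
  distributed_subgradient_free_as_consensus_general (inst := inst) μ m n f X L a b e η κ W ι c ξ Δ ε
    P hL hlip hXcl hXcv hXbd hXcapne hP hη0 hWnonneg hWrow hWcol hWdiag hκ hconn hinit hupdate ha hb
    hΔbound hεmem hε2 hιpos hιsum hcpos hratio2
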